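/- arXiv:0911.4040 — 4 statements merged into one kernel-verified Lean document; each statement's English description precedes it below -/
import Mathlib

section
/- For integers p ≥ 5 and h ≥ 4, the polynomial P(X) = X³ − ((p−3)(h−1)+1)X² − ((p−2)(h−1)−2)X − (h−3) has a real root α₁ with −1 < α₁ < −1/2 and a real root α₂ with −1/2 < α₂ < 0. -/
open Set

def splittingPoly (p h x : ℝ) : ℝ :=
  x ^ 3 - ((p - 3) * (h - 1) + 1) * x ^ 2 - ((p - 2) * (h - 1) - 2) * x - (h - 3)

theorem continuous_splittingPoly (p h : ℝ) : Continuous (splittingPoly p h) := by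
  unfold splittingPoly
  fun_prop

theorem splittingPoly_neg_one (p h : ℝ) : splittingPoly p h (-1) = -2 := by
  unfold splittingPoly
  ring

theorem splittingPoly_neg_half_pos {p h : ℝ} (hp : 5 ≤ p) (hh : 1 ≤ h) :
    0 < splittingPoly p h (-1 / 2) := by
  have hval : splittingPoly p h (-1 / 2) = (2 * p * (h - 1) - 10 * h + 15) / 8 := by
    unfold splittingPoly
    ring
  have hbound : 5 * (h - 1) ≤ p * (h - 1) := mul_le_mul_of_nonneg_right hp (by linarith)
  rw [hval]
  linarith

theorem splittingPoly_zero_neg {p h : ℝ} (hh : 3 < h) : splittingPoly p h 0 < 0 := by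
  unfold splittingPoly
  linarith

theorem exists_root_of_neg_of_pos {f : ℝ → ℝ} {a b : ℝ} (hab : a ≤ b)
    (hf : ContinuousOn f (Icc a b)) (ha : f a < 0) (hb : 0 < f b) :
    ∃ x, f x = 0 ∧ a < x ∧ x < b := by
  obtain ⟨x, ⟨hax, hxb⟩, hx⟩ := intermediate_value_Ioo hab hf ⟨ha, hb⟩
  exact ⟨x, hx, hax, hxb⟩

theorem exists_root_of_pos_of_neg {f : ℝ → ℝ} {a b : ℝ} (hab : a ≤ b)
    (hf : ContinuousOn f (Icc a b)) (ha : 0 < f a) (hb : f b < 0) :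
    ∃ x, f x = 0 ∧ a < x ∧ x < b := by
  obtain ⟨x, ⟨hax, hxb⟩, hx⟩ := intermediate_value_Ioo' hab hf ⟨hb, ha⟩
  exact ⟨x, hx, hax, hxb⟩

/-- For integers `p ≥ 5` and `h ≥ 4`, the polynomial
`P(X) = X³ − ((p−3)(h−1)+1)X² − ((p−2)(h−1)−2)X − (h−3)` has a real root `α₁` with
`−1 < α₁ < −1/2` and a real root `α₂` with `−1/2 < α₂ < 0`. -/
theorem splitting_odd_small_roots (p h : ℤ) (hp : 5 ≤ p) (hh : 4 ≤ h)
    (P : ℝ → ℝ)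
    (hP : ∀ x : ℝ, P x =
      x ^ 3 - (((p : ℝ) - 3) * ((h : ℝ) - 1) + 1) * x ^ 2
        - (((p : ℝ) - 2) * ((h : ℝ) - 1) - 2) * x - ((h : ℝ) - 3)) :
    (∃ α₁ : ℝ, P α₁ = 0 ∧ -1 < α₁ ∧ α₁ < -1 / 2) ∧
      (∃ α₂ : ℝ, P α₂ = 0 ∧ -1 / 2 < α₂ ∧ α₂ < 0) := by
  have hp' : (5 : ℝ) ≤ p := by exact_mod_cast hp
  have hh' : (4 : ℝ) ≤ h := by exact_mod_cast hh
  rw [show P = splittingPoly p h from funext hP]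
  have hcont (a b : ℝ) := (continuous_splittingPoly p h).continuousOn (s := Icc a b)
  have hhalf := splittingPoly_neg_half_pos hp' (by linarith)
  refine ⟨exists_root_of_neg_of_pos (by norm_num) (hcont _ _) ?_ hhalf,
    exists_root_of_pos_of_neg (by norm_num) (hcont _ _) hhalf (splittingPoly_zero_neg (by linarith))⟩
  rw [splittingPoly_neg_one]
  norm_num
end

section
/- For integers p ≥ 5 and h ≥ 4, the polynomial P(X) = X³ − ((p−3)(h−1)+1)X² − ((p−2)(h−1)−2)X − (h−3) has three real roots α₁, α₂, β with |α₁| < 1, |α₂| < 1 and β > 1; that is, P is a Pisot polynomial. -/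
/-!
The cubic `x³ - A x² - B x - C` of the splitting has `B = A + C - 1`, so it takes the value `-2`
at `-1`; it is positive at `-1/2` and negative at `1`. The intermediate value theorem then
gives roots in `(-1, -1/2)`, `(-1/2, 1)` and `(1, ∞)`, and a monic cubic with three distinct
roots is the product of the corresponding linear factors.
-/

section Cubic

variable {R : Type*} [CommRing R]

def cubic (A B C x : R) : R := x ^ 3 - A * x ^ 2 - B * x - C

theorem cubic_eq_mul_of_roots [IsDomain R] {A B C a b c : R}
    (hab : a ≠ b) (hac : a ≠ c) (hbc : b ≠ c)
    (ha : cubic A B C a = 0) (hb : cubic A B C b = 0) (hc : cubic A B C c = 0) (x : R) :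
    cubic A B C x = (x - a) * (x - b) * (x - c) := by
  unfold cubic at *
  -- divided differences of the cubic at its roots give Vieta's relations
  have hab' : a ^ 2 + a * b + b ^ 2 - A * (a + b) - B = 0 :=
    (mul_eq_zero.mp (by linear_combination ha - hb)).resolve_left (sub_ne_zero.mpr hab)
  have hac' : a ^ 2 + a * c + c ^ 2 - A * (a + c) - B = 0 :=
    (mul_eq_zero.mp (by linear_combination ha - hc)).resolve_left (sub_ne_zero.mpr hac)
  have hsum : a + b + c - A = 0 :=
    (mul_eq_zero.mp (by linear_combination hab' - hac')).resolve_left (sub_ne_zero.mpr hbc)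
  have hB : B = -(a * b + a * c + b * c) := by linear_combination -hab' + (a + b) * hsum
  have hC : C = a * b * c := by linear_combination -ha + a ^ 2 * hsum - a * hB
  linear_combination x ^ 2 * hsum - x * hB - hC

end Cubic

theorem continuous_cubic (A B C : ℝ) : Continuous (cubic A B C) := by
  unfold cubic; fun_prop

theorem cubic_one_add_abs_pos (A B C : ℝ) : 0 < cubic A B C (1 + |A| + |B| + |C|) := by
  set M := 1 + |A| + |B| + |C|
  have hM : 1 ≤ M := by simp only [M]; linarith [abs_nonneg A, abs_nonneg B, abs_nonneg C]
  have hMA : 1 + |B| + |C| ≤ M - A := by simp only [M]; linarith [le_abs_self A]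
  calc 0 < |B| * (M * (M - 1)) + |C| * (M ^ 2 - 1) + M ^ 2 :=
        add_pos_of_nonneg_of_pos (add_nonneg (mul_nonneg (abs_nonneg B) (by nlinarith))
          (mul_nonneg (abs_nonneg C) (by nlinarith))) (pow_pos (by linarith) 2)
    _ = M ^ 2 * (1 + |B| + |C|) - |B| * M - |C| := by ring
    _ ≤ M ^ 2 * (M - A) - B * M - C := by
        linarith [mul_le_mul_of_nonneg_left hMA (sq_nonneg M),
          mul_le_mul_of_nonneg_right (le_abs_self B) (by linarith : (0 : ℝ) ≤ M), le_abs_self C]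
    _ = cubic A B C M := by unfold cubic; ring

theorem exists_roots_of_sign_changes {A B C t : ℝ} (ht₀ : -1 < t) (ht₁ : t < 1)
    (hneg : cubic A B C (-1) < 0) (hpos : 0 < cubic A B C t) (hone : cubic A B C 1 < 0) :
    ∃ α₁ α₂ β : ℝ, (∀ x, cubic A B C x = (x - α₁) * (x - α₂) * (x - β)) ∧
      |α₁| < 1 ∧ |α₂| < 1 ∧ 1 < β := by
  have hf {s : Set ℝ} : ContinuousOn (cubic A B C) s := (continuous_cubic A B C).continuousOn
  obtain ⟨α₁, ⟨hα₁l, hα₁r⟩, hα₁⟩ := intermediate_value_Ioo ht₀.le hf ⟨hneg, hpos⟩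
  obtain ⟨α₂, ⟨hα₂l, hα₂r⟩, hα₂⟩ := intermediate_value_Ioo' ht₁.le hf ⟨hone, hpos⟩
  obtain ⟨β, ⟨hβl, -⟩, hβ⟩ := intermediate_value_Ioo
    (by linarith [abs_nonneg A, abs_nonneg B, abs_nonneg C]) hf ⟨hone, cubic_one_add_abs_pos A B C⟩
  refine ⟨α₁, α₂, β, cubic_eq_mul_of_roots (by linarith) (by linarith) (by linarith) hα₁ hα₂ hβ,
    abs_lt.mpr ⟨hα₁l, by linarith⟩, abs_lt.mpr ⟨by linarith, hα₂r⟩, hβl⟩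

/-- For integers `p ≥ 5` and `h ≥ 4`, the polynomial
`P(X) = X³ − ((p−3)(h−1)+1)X² − ((p−2)(h−1)−2)X − (h−3)` has three real roots
`α₁, α₂, β` with `|α₁| < 1`, `|α₂| < 1` and `β > 1`; that is, `P` is a Pisot polynomial. -/
theorem splitting_odd_pisot (p h : ℤ) (hp : 5 ≤ p) (hh : 4 ≤ h)
    (P : ℝ → ℝ)
    (hP : ∀ x : ℝ, P x =
      x ^ 3 - (((p : ℝ) - 3) * ((h : ℝ) - 1) + 1) * x ^ 2
        - (((p : ℝ) - 2) * ((h : ℝ) - 1) - 2) * x - ((h : ℝ) - 3)) :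
    ∃ α₁ α₂ β : ℝ, (∀ x : ℝ, P x = (x - α₁) * (x - α₂) * (x - β)) ∧
      |α₁| < 1 ∧ |α₂| < 1 ∧ 1 < β := by
  have hp' : (5 : ℝ) ≤ p := by exact_mod_cast hp
  have hh' : (4 : ℝ) ≤ h := by exact_mod_cast hh
  have hPcubic : P = cubic (((p : ℝ) - 3) * ((h : ℝ) - 1) + 1)
      (((p : ℝ) - 2) * ((h : ℝ) - 1) - 2) ((h : ℝ) - 3) := funext hP
  rw [hPcubic]
  refine exists_roots_of_sign_changes (t := -1 / 2) (by norm_num) (by norm_num) ?_ ?_ ?_ <;>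
    unfold cubic <;> nlinarith
end

section
/- For an integer h ≥ 3, every non-real complex root z of the polynomial P(X) = X³ − hX² − 2(h−2)X − (h−3) satisfies |z|² < 1 − 3/h, and in particular |z| < 1. -/
/-!
The roots of `P` are `z`, `conj z` and a real `r`, so by Vieta `2 Re z + r = h`,
`|z|² + 2 Re z · r = -2(h - 2) < 0` and `|z|² r = h - 3 ≥ 0`. The last gives `r ≥ 0`, so the
middle one forces `Re z < 0`, hence `r > h` and `|z|² = (h - 3) / r < (h - 3) / h`.
-/

open Complex

theorem Complex.sq_sub_two_re_mul_add_normSq (z : ℂ) :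
    z ^ 2 - 2 * (z.re : ℂ) * z + (normSq z : ℂ) = 0 := by
  rw [re_eq_add_conj, ← mul_conj]
  ring

theorem Complex.eq_zero_of_ofReal_mul_add_ofReal_eq_zero {α β : ℝ} {z : ℂ}
    (h : (α : ℂ) * z + β = 0) (him : z.im ≠ 0) : α = 0 ∧ β = 0 := by
  have hα : α = 0 := by simpa [him] using congrArg Complex.im h
  subst hα
  simpa using h

/-- Vieta's formulas for a real monic cubic with the non-real root `z`; `r` is the real root. -/
theorem Complex.exists_vieta_of_cubic_eq_zero {a b c : ℝ} {z : ℂ}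
    (hz : z ^ 3 + a * z ^ 2 + b * z + c = 0) (him : z.im ≠ 0) :
    ∃ r : ℝ, 2 * z.re + r = -a ∧ normSq z + 2 * z.re * r = b ∧ normSq z * r = -c := by
  set r := -a - 2 * z.re
  have hr : (r : ℂ) = -a - 2 * z.re := by simp [r]
  -- dividing by the real quadratic `(X - z)(X - conj z)` leaves a real linear remainder
  have hrem : ((b - normSq z - 2 * z.re * r : ℝ) : ℂ) * z + ((c + normSq z * r : ℝ) : ℂ) = 0 := by
    push_cast
    linear_combination hz - (z - r) * z.sq_sub_two_re_mul_add_normSq - z ^ 2 * hr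
  obtain ⟨hb, hc⟩ := eq_zero_of_ofReal_mul_add_ofReal_eq_zero hrem him
  exact ⟨r, by ring, by linarith, by linarith⟩

/-- For an integer `h ≥ 3`, every non-real complex root `z` of the polynomial
`P(X) = X³ − hX² − 2(h−2)X − (h−3)` satisfies `|z|² < 1 − 3/h`, and in particular
`|z| < 1`. -/
theorem splitting_odd_p_eq_four_complex_roots (h : ℤ) (hh : 3 ≤ h) (z : ℂ)
    (hz : z ^ 3 - (h : ℂ) * z ^ 2 - 2 * ((h : ℂ) - 2) * z - ((h : ℂ) - 3) = 0)
    (him : z.im ≠ 0) :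
    ‖z‖ ^ 2 < 1 - 3 / (h : ℝ) ∧ ‖z‖ < 1 := by
  have hh' : (3 : ℝ) ≤ h := by exact_mod_cast hh
  have hz' : z ^ 3 + ((-h : ℝ) : ℂ) * z ^ 2 + ((-2 * (h - 2) : ℝ) : ℂ) * z
      + ((-(h - 3) : ℝ) : ℂ) = 0 := by
    push_cast
    linear_combination hz
  obtain ⟨r, he₁, he₂, he₃⟩ := exists_vieta_of_cubic_eq_zero hz' him
  have hm : 0 < normSq z := normSq_pos.2 fun h0 ↦ him (by simp [h0])
  have hr : 0 ≤ r := nonneg_of_mul_nonneg_right (by linarith) hm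
  have hx : z.re < 0 := neg_of_mul_neg_left (by linarith) hr
  have hsq : ‖z‖ ^ 2 < 1 - 3 / (h : ℝ) := by
    rw [Complex.sq_norm, one_sub_div (by positivity), lt_div_iff₀ (by positivity)]
    nlinarith [mul_pos hm (neg_pos.2 hx)]
  exact ⟨hsq, (sq_lt_one_iff₀ (norm_nonneg z)).1 (hsq.trans (sub_lt_self 1 (by positivity)))⟩
end

section
/- For integers p ≥ 4 and q > 7, the polynomial Q(X) = X² − ((p−3)(q−3)+1)X − (q−7) satisfies Q((p−3)(q−3)) = −(p−3)(q−3) − q + 7 < 0, hence has two real roots α and β with β > (p−3)(q−3) > 1 and |α| < 1/(p−3) ≤ 1; that is, Q is a Pisot polynomial. -/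
/-!
Since `Q(0) = -(q-7) < 0` and `Q((p-3)(q-3)) < 0`, both points lie strictly between the two real
roots, so `α < 0 < (p-3)(q-3) < β`. With `P = p - 3` and `q - 7 = (q-3) - 4` one computes
`Q(-1/P) = 1/P² + 1/P + 4 > 0`, so `-1/P` lies outside the roots, to the left of `α`.
-/

theorem exists_factorization_of_quadratic_neg {f : ℝ → ℝ} {b c m : ℝ}
    (hf : ∀ x, f x = x ^ 2 - b * x - c) (hm : f m < 0) :
    ∃ α β : ℝ, (∀ x, f x = (x - α) * (x - β)) ∧ α < m ∧ m < β := by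
  rw [hf] at hm
  have hdisc : 0 < b ^ 2 + 4 * c := by nlinarith [sq_nonneg (2 * m - b)]
  set s := Real.sqrt (b ^ 2 + 4 * c)
  have hs : s ^ 2 = b ^ 2 + 4 * c := Real.sq_sqrt hdisc.le
  have hs0 : 0 ≤ s := Real.sqrt_nonneg _
  have hms : |2 * m - b| < s := by
    rw [← abs_of_nonneg hs0]
    exact sq_lt_sq.mp (by nlinarith)
  obtain ⟨hlo, hhi⟩ := abs_lt.mp hms
  refine ⟨(b - s) / 2, (b + s) / 2, fun x => ?_, by linarith, by linarith⟩
  rw [hf]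
  linear_combination (1 / 4 : ℝ) * hs

theorem lt_and_lt_of_mul_sub_neg {α β x : ℝ} (hαβ : α ≤ β) (h : (x - α) * (x - β) < 0) :
    α < x ∧ x < β := by
  constructor <;> nlinarith

theorem lt_of_mul_sub_pos {α β x : ℝ} (hx : x < β) (h : 0 < (x - α) * (x - β)) : x < α := by
  nlinarith

/-- For integers `p ≥ 4` and `q > 7`, the polynomial
`Q(X) = X² − ((p−3)(q−3)+1)X − (q−7)` satisfies
`Q((p−3)(q−3)) = −(p−3)(q−3) − q + 7 < 0`, hence has two real roots `α` and `β` with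
`β > (p−3)(q−3) > 1` and `|α| < 1/(p−3) ≤ 1`; that is, `Q` is a Pisot polynomial. -/
theorem variant_splitting_pisot (p q : ℤ) (hp : 4 ≤ p) (hq : 7 < q)
    (Q : ℝ → ℝ)
    (hQ : ∀ x : ℝ, Q x =
      x ^ 2 - (((p : ℝ) - 3) * ((q : ℝ) - 3) + 1) * x - ((q : ℝ) - 7)) :
    Q (((p : ℝ) - 3) * ((q : ℝ) - 3)) = -(((p : ℝ) - 3) * ((q : ℝ) - 3)) - (q : ℝ) + 7 ∧
      Q (((p : ℝ) - 3) * ((q : ℝ) - 3)) < 0 ∧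
      (∃ α β : ℝ, (∀ x : ℝ, Q x = (x - α) * (x - β)) ∧
        ((p : ℝ) - 3) * ((q : ℝ) - 3) < β ∧ |α| < 1 / ((p : ℝ) - 3)) ∧
      1 < ((p : ℝ) - 3) * ((q : ℝ) - 3) ∧ 1 / ((p : ℝ) - 3) ≤ 1 := by
  set P : ℝ := (p : ℝ) - 3
  have hpR : (4 : ℝ) ≤ p := by exact_mod_cast hp
  have hqR : (7 : ℝ) < q := by exact_mod_cast hq
  have hP : 1 ≤ P := by linarith
  have hR : 4 < (q : ℝ) - 3 := by linarith
  have hP_inv : 0 < 1 / P := one_div_pos.mpr (by linarith)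
  have hm : 1 < P * ((q : ℝ) - 3) := by nlinarith
  have hQm : Q (P * ((q : ℝ) - 3)) = -(P * ((q : ℝ) - 3)) - q + 7 := by rw [hQ]; ring
  have hQm_neg : Q (P * ((q : ℝ) - 3)) < 0 := by rw [hQm]; linarith
  obtain ⟨α, β, hfac, hαm, hmβ⟩ := exists_factorization_of_quadratic_neg hQ hQm_neg
  have hQ0_neg : Q 0 < 0 := by rw [hQ]; linarith
  have hα0 : α < 0 := (lt_and_lt_of_mul_sub_neg (hαm.trans hmβ).le (hfac 0 ▸ hQ0_neg)).1
  have hQ_inv_pos : 0 < Q (-(1 / P)) := by rw [hQ]; field_simp; nlinarith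
  have hαP : -(1 / P) < α := lt_of_mul_sub_pos (by linarith) (hfac _ ▸ hQ_inv_pos)
  refine ⟨hQm, hQm_neg, ⟨α, β, hfac, hmβ, abs_lt.mpr ⟨hαP, by linarith⟩⟩, hm, ?_⟩
  exact (div_le_one (by linarith)).mpr hP
end
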